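/- arXiv:2111.11820 — 8 statements merged into one kernel-verified Lean document; each statement's English description precedes it below -/
import Mathlib

section
/- Let G be a finite simple graph on n vertices in which every two distinct vertices have at most two common neighbors, let μ be a nonzero eigenvalue of A(G), and let z be a corresponding real eigenvector normalized so that max_u |z_u| ≤ 1. Then for every vertex u, μ²·|z_u| ≤ d_u + 4·e(G)/|μ|. -/
open Finset
open scoped BigOperators Classical

theorem stmt2 {n : ℕ} (G : SimpleGraph (Fin n))
    (hK23 : ∀ u v : Fin n, u ≠ v →
      (G.neighborFinset u ∩ G.neighborFinset v).card ≤ 2)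
    (μ : ℝ) (hμ : μ ≠ 0) (z : Fin n → ℝ) (hz : z ≠ 0)
    (heig : (G.adjMatrix ℝ).mulVec z = μ • z)
    (hnorm : ∀ u, |z u| ≤ 1) :
    ∀ u : Fin n, μ ^ 2 * |z u| ≤ (G.degree u : ℝ) + 4 * (G.edgeFinset.card : ℝ) / |μ| := by
  intro u
  have hμpos : (0:ℝ) < |μ| := abs_pos.mpr hμ
  set A := G.adjMatrix ℝ with hA
  -- eigenvector pointwise bound: |μ| * |z w| ≤ degree w
  have hdeg : ∀ w, |μ| * |z w| ≤ (G.degree w : ℝ) := by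
    intro w
    have h1 : μ * z w = ∑ v ∈ G.neighborFinset w, z v := by
      have h0 : (G.adjMatrix ℝ).mulVec z w = (μ • z) w := congrFun heig w
      rw [SimpleGraph.adjMatrix_mulVec_apply] at h0
      simpa using h0.symm
    calc |μ| * |z w| = |μ * z w| := (abs_mul μ (z w)).symm
      _ = |∑ v ∈ G.neighborFinset w, z v| := by rw [h1]
      _ ≤ ∑ v ∈ G.neighborFinset w, |z v| := Finset.abs_sum_le_sum_abs _ _
      _ ≤ ∑ v ∈ G.neighborFinset w, 1 := Finset.sum_le_sum (fun v _ => hnorm v)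
      _ = (G.degree w : ℝ) := by simp [SimpleGraph.card_neighborFinset_eq_degree]
  have hzbound : ∀ w, |z w| ≤ (G.degree w : ℝ) / |μ| := by
    intro w
    rw [le_div_iff₀ hμpos]
    calc |z w| * |μ| = |μ| * |z w| := mul_comm _ _
      _ ≤ _ := hdeg w
  -- entries of A * A
  have hAA : ∀ w, (A * A) u w
      = ((G.neighborFinset u ∩ G.neighborFinset w).card : ℝ) := by
    intro w
    rw [Matrix.mul_apply]
    have key : ∀ v, A u v * A v w = if v ∈ G.neighborFinset u ∩ G.neighborFinset w then (1:ℝ) else 0 := by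
      intro v
      by_cases h1 : G.Adj u v <;> by_cases h2 : G.Adj w v
      · simp [hA, h1, h2, h2.symm]
      · have h3 : ¬ G.Adj v w := fun h => h2 h.symm
        simp [hA, h1, h2, h3]
      · simp [hA, h1]
      · simp [hA, h1]
    rw [Finset.sum_congr rfl (fun v _ => key v)]
    simp only [Finset.sum_ite_mem, Finset.univ_inter, Finset.sum_const, nsmul_eq_mul, mul_one]
  -- A² z = μ² z
  have h2 : (A * A).mulVec z = (μ ^ 2) • z := by
    rw [← Matrix.mulVec_mulVec, heig, Matrix.mulVec_smul, heig, smul_smul]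
    ring_nf
  have hmain : μ ^ 2 * z u = ∑ w, (A * A) u w * z w := by
    have := congrFun h2 u
    simpa [Matrix.mulVec, dotProduct] using this.symm
  have hsum : ∑ w, (A * A) u w * |z w|
      = (A * A) u u * |z u| + ∑ w ∈ Finset.univ.erase u, (A * A) u w * |z w| :=
    (Finset.add_sum_erase _ _ (Finset.mem_univ u)).symm
  have huu : (A * A) u u = (G.degree u : ℝ) := by
    rw [hAA u]; simp [SimpleGraph.card_neighborFinset_eq_degree]
  have hterm1 : (A * A) u u * |z u| ≤ (G.degree u : ℝ) := by
    rw [huu]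
    calc (G.degree u : ℝ) * |z u| ≤ (G.degree u : ℝ) * 1 :=
          mul_le_mul_of_nonneg_left (hnorm u) (by positivity)
      _ = _ := mul_one _
  have hterm2 : ∑ w ∈ Finset.univ.erase u, (A * A) u w * |z w|
      ≤ 4 * (G.edgeFinset.card : ℝ) / |μ| := by
    have hstep : ∀ w ∈ Finset.univ.erase u, (A * A) u w * |z w|
        ≤ 2 * ((G.degree w : ℝ) / |μ|) := by
      intro w hw
      have hne : u ≠ w := (Finset.ne_of_mem_erase hw).symm
      have hc : (A * A) u w ≤ 2 := by
        rw [hAA w]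
        exact_mod_cast hK23 u w hne
      have hc0 : (0:ℝ) ≤ (A * A) u w := by rw [hAA w]; positivity
      exact mul_le_mul hc (hzbound w) (abs_nonneg _) (by norm_num)
    calc ∑ w ∈ Finset.univ.erase u, (A * A) u w * |z w|
        ≤ ∑ w ∈ Finset.univ.erase u, 2 * ((G.degree w : ℝ) / |μ|) :=
          Finset.sum_le_sum hstep
      _ ≤ ∑ w, 2 * ((G.degree w : ℝ) / |μ|) := by
          apply Finset.sum_le_sum_of_subset_of_nonneg (Finset.erase_subset _ _)
          intro w _ _; positivity
      _ = (2 / |μ|) * ∑ w, (G.degree w : ℝ) := by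
          rw [Finset.mul_sum]; congr 1; ext w; ring
      _ = (2 / |μ|) * (2 * (G.edgeFinset.card : ℝ)) := by
          rw [show (∑ w, (G.degree w : ℝ)) = 2 * (G.edgeFinset.card : ℝ) from by
            exact_mod_cast G.sum_degrees_eq_twice_card_edges]
      _ = 4 * (G.edgeFinset.card : ℝ) / |μ| := by ring
  calc μ ^ 2 * |z u| = |μ ^ 2 * z u| := by
        rw [abs_mul, abs_of_nonneg (sq_nonneg μ)]
    _ = |∑ w, (A * A) u w * z w| := by rw [hmain]
    _ ≤ ∑ w, |(A * A) u w * z w| := Finset.abs_sum_le_sum_abs _ _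
    _ = ∑ w, (A * A) u w * |z w| := by
        apply Finset.sum_congr rfl
        intro w _
        rw [abs_mul, abs_of_nonneg (by rw [hAA w]; positivity)]
    _ = _ := hsum
    _ ≤ (G.degree u : ℝ) + 4 * (G.edgeFinset.card : ℝ) / |μ| :=
        add_le_add hterm1 hterm2
end

section
/- Let G be a finite simple graph on n ≥ 2 vertices having a dominating vertex w (a vertex adjacent to all other n−1 vertices), and let m be the number of edges of G not incident to w. Then λ_min(G) ≤ −√(n−1) + m/(n−1). -/
open Finset
open scoped BigOperators Classical

/-- The smallest adjacency eigenvalue of a graph. -/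
noncomputable def lamMin {V : Type*} [Fintype V] [DecidableEq V] (G : SimpleGraph V) : ℝ :=
  sInf (spectrum ℝ (G.adjMatrix ℝ))

open Matrix

theorem sInf_spectrum_le_rayleigh' {n : Type*} [Fintype n] [DecidableEq n] [Nonempty n]
    (A : Matrix n n ℝ) (hA : A.IsHermitian) (x : n → ℝ) (hx : 0 < x ⬝ᵥ x) :
    sInf (spectrum ℝ A) ≤ (x ⬝ᵥ (A *ᵥ x)) / (x ⬝ᵥ x) := by
  set U : Matrix n n ℝ := (hA.eigenvectorUnitary : Matrix n n ℝ) with hU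
  set d : n → ℝ := hA.eigenvalues with hd
  have hUmem : U ∈ Matrix.unitaryGroup n ℝ := hA.eigenvectorUnitary.2
  have hstar : star U = Uᵀ := by
    rw [Matrix.star_eq_conjTranspose]
    ext i j
    simp [Matrix.conjTranspose_apply]
  set y : n → ℝ := (star U) *ᵥ x with hy
  have hspec : A = U * Matrix.diagonal d * star U := by
    have := hA.spectral_theorem
    simpa using this
  have hxy : x = U *ᵥ y := by
    rw [hy, Matrix.mulVec_mulVec, Matrix.mem_unitaryGroup_iff.mp hUmem, Matrix.one_mulVec]
  have hQ : x ⬝ᵥ (A *ᵥ x) = ∑ i, d i * (y i)^2 := by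
    rw [hspec, ← Matrix.mulVec_mulVec, ← Matrix.mulVec_mulVec, Matrix.dotProduct_mulVec x U,
      ← hy]
    have h2 : x ᵥ* U = y := by rw [hy, hstar, Matrix.mulVec_transpose]
    rw [h2]
    simp [Matrix.mulVec_diagonal, dotProduct]
    exact Finset.sum_congr rfl fun i _ => by ring
  have hN : x ⬝ᵥ x = ∑ i, (y i)^2 := by
    conv_lhs => rw [hxy]
    rw [Matrix.dotProduct_mulVec]
    have h3 : (U *ᵥ y) ᵥ* U = y := by
      rw [← Matrix.mulVec_transpose, ← hstar, Matrix.mulVec_mulVec,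
        Matrix.mem_unitaryGroup_iff'.mp hUmem, Matrix.one_mulVec]
    rw [h3, dotProduct]
    ring_nf
  obtain ⟨i0, -, hmin⟩ := Finset.exists_min_image Finset.univ d
    ⟨Classical.arbitrary n, Finset.mem_univ _⟩
  have h1 : d i0 * (x ⬝ᵥ x) ≤ x ⬝ᵥ (A *ᵥ x) := by
    rw [hQ, hN, Finset.mul_sum]
    exact Finset.sum_le_sum fun i _ =>
      mul_le_mul_of_nonneg_right (hmin i (Finset.mem_univ i)) (sq_nonneg _)
  calc sInf (spectrum ℝ A) ≤ d i0 :=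
        csInf_le A.finite_spectrum.bddBelow (hA.eigenvalues_mem_spectrum_real i0)
    _ ≤ (x ⬝ᵥ (A *ᵥ x)) / (x ⬝ᵥ x) := (le_div_iff₀ hx).mpr h1

theorem stmt3 {n : ℕ} (hn : 2 ≤ n) (G : SimpleGraph (Fin n)) (w : Fin n)
    (hw : ∀ v : Fin n, v ≠ w → G.Adj w v)
    (m : ℕ) (hm : m = (G.edgeFinset.filter (fun e => w ∉ e)).card) :
    lamMin G ≤ -Real.sqrt ((n : ℝ) - 1) + (m : ℝ) / ((n : ℝ) - 1) := by
  have : Nonempty (Fin n) := ⟨⟨0, by omega⟩⟩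
  have hn1 : (0:ℝ) < (n:ℝ) - 1 := by
    have : (2:ℝ) ≤ (n:ℝ) := by exact_mod_cast hn
    linarith
  set s : ℝ := Real.sqrt ((n:ℝ) - 1) with hs
  have hs2 : s^2 = (n:ℝ) - 1 := Real.sq_sqrt (le_of_lt hn1)
  set x : Fin n → ℝ := fun v => if v = w then s else -1 with hx
  have hxw : x w = s := if_pos rfl
  have hxv : ∀ v : Fin n, v ≠ w → x v = -1 := fun v hv => if_neg hv
  have hA : (G.adjMatrix ℝ).IsHermitian := by
    ext i j
    simp [Matrix.conjTranspose_apply, SimpleGraph.adjMatrix_apply, SimpleGraph.adj_comm]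
  have hAdj : ∀ v, G.Adj w v ↔ v ≠ w := fun v => ⟨fun h => (G.ne_of_adj h).symm, hw v⟩
  have hNw : G.neighborFinset w = Finset.univ.erase w := by
    ext v
    simp [SimpleGraph.mem_neighborFinset, hAdj]
  have hcardR : ((Finset.univ.erase w).card : ℝ) = (n:ℝ) - 1 := by
    rw [Finset.card_erase_of_mem (Finset.mem_univ _), Finset.card_univ, Fintype.card_fin,
      Nat.cast_sub (by omega)]
    simp
  have hdegw : (G.degree w : ℝ) = (n:ℝ) - 1 := by
    rw [SimpleGraph.degree, hNw]; exact hcardR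
  set E : ℕ := G.edgeFinset.card with hE
  have hmE : (m:ℝ) = (E:ℝ) - ((n:ℝ) - 1) := by
    have h1 : (G.edgeFinset.filter (fun e => w ∉ e)).card
        = E - (G.edgeFinset.filter (fun e => w ∈ e)).card := by
      rw [hE, ← Finset.card_filter_add_card_filter_not (s := G.edgeFinset)
        (p := fun e => w ∈ e)]
      omega
    have h2 : ((G.edgeFinset.filter (fun e => w ∈ e)).card : ℝ) = (n:ℝ) - 1 := by
      rw [← SimpleGraph.incidenceFinset_eq_filter, SimpleGraph.card_incidenceFinset_eq_degree,
        hdegw]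
    have h3 : (G.edgeFinset.filter (fun e => w ∈ e)).card ≤ E := Finset.card_filter_le _ _
    rw [hm, h1, Nat.cast_sub h3, h2]
  have hsumdeg : ∑ v, (G.degree v : ℝ) = 2 * (E:ℝ) := by
    rw [← Nat.cast_sum]
    exact_mod_cast congrArg (Nat.cast : ℕ → ℝ) (G.sum_degrees_eq_twice_card_edges)
  have hSw : ∑ u ∈ G.neighborFinset w, x u = -((n:ℝ) - 1) := by
    rw [hNw, Finset.sum_congr rfl (fun u hu => hxv u (Finset.ne_of_mem_erase hu)),
      Finset.sum_const, nsmul_eq_mul, hcardR]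
    ring
  have hSv : ∀ v, v ≠ w → ∑ u ∈ G.neighborFinset v, x u = s - ((G.degree v : ℝ) - 1) := by
    intro v hv
    have hwv : w ∈ G.neighborFinset v := by
      rw [SimpleGraph.mem_neighborFinset]
      exact (hw v hv).symm
    rw [← Finset.add_sum_erase _ _ hwv, hxw,
      Finset.sum_congr rfl (fun u hu => hxv u (Finset.ne_of_mem_erase hu)),
      Finset.sum_const, nsmul_eq_mul, Finset.card_erase_of_mem hwv]
    have hd1 : 1 ≤ #(G.neighborFinset v) := Finset.card_pos.mpr ⟨w, hwv⟩
    rw [Nat.cast_sub hd1, SimpleGraph.card_neighborFinset_eq_degree]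
    push_cast
    ring
  have hQ : x ⬝ᵥ ((G.adjMatrix ℝ) *ᵥ x) = 2 * (m:ℝ) - 2 * ((n:ℝ) - 1) * s := by
    rw [dotProduct]
    simp only [SimpleGraph.adjMatrix_mulVec_apply]
    rw [← Finset.add_sum_erase _ _ (Finset.mem_univ w)]
    have hterm : ∀ v ∈ Finset.univ.erase w,
        x v * ∑ u ∈ G.neighborFinset v, x u = ((G.degree v : ℝ) - 1) - s := by
      intro v hv
      rw [hSv v (Finset.ne_of_mem_erase hv), hxv v (Finset.ne_of_mem_erase hv)]
      ring
    have hdsum : ∑ v ∈ Finset.univ.erase w, (G.degree v : ℝ) = 2 * (E:ℝ) - ((n:ℝ) - 1) := by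
      rw [Finset.sum_erase_eq_sub (Finset.mem_univ w), hsumdeg, hdegw]
    rw [Finset.sum_congr rfl hterm, hSw, hxw, Finset.sum_sub_distrib, Finset.sum_sub_distrib,
      hdsum]
    simp only [Finset.sum_const, nsmul_eq_mul, hcardR, mul_one]
    rw [hmE]
    ring
  have hN : x ⬝ᵥ x = 2 * ((n:ℝ) - 1) := by
    rw [dotProduct, ← Finset.add_sum_erase _ _ (Finset.mem_univ w)]
    have h5 : ∀ v ∈ Finset.univ.erase w, x v * x v = 1 := by
      intro v hv
      rw [hxv v (Finset.ne_of_mem_erase hv)]; ring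
    rw [Finset.sum_congr rfl h5, Finset.sum_const, nsmul_eq_mul, hcardR, hxw, mul_one]
    nlinarith [hs2]
  have hNpos : 0 < x ⬝ᵥ x := by rw [hN]; linarith
  have key := sInf_spectrum_le_rayleigh' (G.adjMatrix ℝ) hA x hNpos
  rw [hQ, hN] at key
  rw [lamMin]
  calc sInf (spectrum ℝ (G.adjMatrix ℝ))
      ≤ (2 * (m:ℝ) - 2 * ((n:ℝ) - 1) * s) / (2 * ((n:ℝ) - 1)) := key
    _ = -s + (m:ℝ) / ((n:ℝ) - 1) := by field_simp; ring
end

section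
/- Let G be a finite simple graph on n ≥ 2 vertices having a dominating vertex w (a vertex adjacent to all other n−1 vertices), and let m be the number of edges of G not incident to w. Then λ_max(G) ≥ √(n−1) + m/(n−1). -/
open Finset
open scoped BigOperators Classical
open scoped InnerProductSpace

private lemma dot_inner' {n : ℕ} (u v : EuclideanSpace ℝ (Fin n)) :
    ⟪u, v⟫_ℝ = dotProduct (WithLp.equiv 2 _ u) (WithLp.equiv 2 _ v) := by
  simp [PiLp.inner_apply, dotProduct, mul_comm]

private lemma rayleigh_le' {n : ℕ} (A : Matrix (Fin n) (Fin n) ℝ) (hA : A.IsHermitian)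
    (x : Fin n → ℝ) :
    dotProduct x (A.mulVec x) ≤ sSup (spectrum ℝ A) * dotProduct x x := by
  classical
  set b := hA.eigenvectorBasis with hb
  set μ := hA.eigenvalues with hμ
  set X : EuclideanSpace ℝ (Fin n) := (WithLp.equiv 2 _).symm x with hX
  set Y : EuclideanSpace ℝ (Fin n) := (WithLp.equiv 2 _).symm (A.mulVec x) with hY
  have hinner : ∀ i, (⟪b i, Y⟫_ℝ) = μ i * ⟪b i, X⟫_ℝ := by
    intro i
    have h1 : A.mulVec (WithLp.equiv 2 _ (b i)) = μ i • (WithLp.equiv 2 _ (b i)) :=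
      hA.mulVec_eigenvectorBasis i
    rw [dot_inner', dot_inner']
    have hsymm : dotProduct (WithLp.equiv 2 _ (b i)) (A.mulVec x)
        = dotProduct (A.mulVec (WithLp.equiv 2 _ (b i))) x := by
      rw [Matrix.dotProduct_mulVec, ← Matrix.mulVec_transpose]
      rw [show A.transpose = A from (Matrix.IsHermitian.transpose hA).eq ▸ (by simpa using congrArg Matrix.transpose hA.eq.symm)]
    simp only [hY, hX, Equiv.apply_symm_apply]
    rw [hsymm, h1]
    simp [smul_dotProduct, mul_assoc]
  have key1 : dotProduct x (A.mulVec x) = ∑ i, μ i * (⟪b i, X⟫_ℝ)^2 := by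
    have := b.sum_inner_mul_inner X Y
    rw [dot_inner' X Y] at this
    simp only [hX, hY, Equiv.apply_symm_apply] at this
    rw [← this]
    refine Finset.sum_congr rfl fun i _ => ?_
    rw [hinner i, real_inner_comm X (b i)]
    ring
  have key2 : dotProduct x x = ∑ i, (⟪b i, X⟫_ℝ)^2 := by
    have := b.sum_inner_mul_inner X X
    rw [dot_inner' X X] at this
    simp only [hX, Equiv.apply_symm_apply] at this
    rw [← this]
    refine Finset.sum_congr rfl fun i _ => ?_
    rw [real_inner_comm X (b i)]
    ring
  have hbdd : BddAbove (spectrum ℝ A) := (A.finite_spectrum).bddAbove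
  have hle : ∀ i, μ i ≤ sSup (spectrum ℝ A) := fun i =>
    le_csSup hbdd (hA.eigenvalues_mem_spectrum_real i)
  rw [key1, key2, Finset.mul_sum]
  exact Finset.sum_le_sum fun i _ =>
    mul_le_mul_of_nonneg_right (hle i) (sq_nonneg _)

/-- The largest adjacency eigenvalue of a graph. -/
noncomputable def lamMax {V : Type*} [Fintype V] [DecidableEq V] (G : SimpleGraph V) : ℝ :=
  sSup (spectrum ℝ (G.adjMatrix ℝ))

theorem stmt4 {n : ℕ} (hn : 2 ≤ n) (G : SimpleGraph (Fin n)) (w : Fin n)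
    (hw : ∀ v : Fin n, v ≠ w → G.Adj w v)
    (m : ℕ) (hm : m = (G.edgeFinset.filter (fun e => w ∉ e)).card) :
    lamMax G ≥ Real.sqrt ((n : ℝ) - 1) + (m : ℝ) / ((n : ℝ) - 1) := by
  classical
  set A := G.adjMatrix ℝ with hAdef
  have hA : A.IsHermitian := by
    ext i j
    simp [hAdef, Matrix.conjTranspose_apply, SimpleGraph.adjMatrix_apply, SimpleGraph.adj_comm]
  have hn1 : (0:ℝ) < (n:ℝ) - 1 := by
    have : (2:ℝ) ≤ n := by exact_mod_cast hn
    linarith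
  set s : ℝ := Real.sqrt ((n:ℝ) - 1) with hs
  have hs2 : s^2 = (n:ℝ) - 1 := Real.sq_sqrt hn1.le
  set x : Fin n → ℝ := fun v => if v = w then s else 1 with hx
  -- cardinality of univ.erase w
  have hcard : ((univ.erase w).card : ℝ) = (n:ℝ) - 1 := by
    rw [Finset.card_erase_of_mem (mem_univ w)]
    simp only [Finset.card_univ, Fintype.card_fin]
    have h1n : 1 ≤ n := le_trans (by norm_num) hn
    rw [Nat.cast_sub h1n]
    push_cast
    ring
  -- x ⬝ x = 2(n-1)
  have hD : dotProduct x x = 2 * ((n:ℝ) - 1) := by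
    rw [dotProduct]
    rw [← Finset.add_sum_erase _ _ (mem_univ w)]
    have h1 : x w * x w = s^2 := by simp [hx]; ring
    have h2 : ∀ v ∈ univ.erase w, x v * x v = 1 := by
      intro v hv
      simp [hx, Finset.ne_of_mem_erase hv]
    rw [h1, Finset.sum_congr rfl h2, Finset.sum_const, nsmul_eq_mul, hs2, hcard]
    ring
  -- 2m: the graph with edges at w deleted
  set G' := G.deleteEdges (G.incidenceSet w) with hG'
  have hedge : G'.edgeFinset = G.edgeFinset.filter (fun e => w ∉ e) := by
    ext e
    simp only [SimpleGraph.mem_edgeFinset, Finset.mem_filter, hG',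
      SimpleGraph.edgeSet_deleteEdges, Set.mem_diff, SimpleGraph.incidenceSet]
    constructor
    · rintro ⟨h1, h2⟩; exact ⟨h1, fun hwe => h2 ⟨h1, hwe⟩⟩
    · rintro ⟨h1, h2⟩; exact ⟨h1, fun ⟨_, hwe⟩ => h2 hwe⟩
  have hG'adj : ∀ u v : Fin n, u ≠ w → v ≠ w → (G'.Adj u v ↔ G.Adj u v) := by
    intro u v hu hv
    simp only [hG', SimpleGraph.deleteEdges_adj, SimpleGraph.mk'_mem_incidenceSet_iff]
    constructor
    · exact fun h => h.1
    · intro h; exact ⟨h, fun ⟨_, hc⟩ => hc.elim (fun hh => hu hh.symm) (fun hh => hv hh.symm)⟩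
  have h2m : ∑ u ∈ univ.erase w, ∑ v ∈ univ.erase w, A u v = 2 * (m:ℝ) := by
    have hrow : ∀ u : Fin n, ∑ v, (G'.adjMatrix ℝ) u v = (G'.degree u : ℝ) := by
      intro u
      rw [← SimpleGraph.card_neighborFinset_eq_degree, SimpleGraph.neighborFinset_eq_filter,
        Finset.natCast_card_filter]
      refine Finset.sum_congr rfl fun v _ => ?_
      simp [SimpleGraph.adjMatrix_apply]
    have hAG' : ∀ u ∈ univ.erase w, ∀ v ∈ univ.erase w, A u v = (G'.adjMatrix ℝ) u v := by
      intro u hu v hv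
      simp [hAdef, SimpleGraph.adjMatrix_apply,
        hG'adj u v (Finset.ne_of_mem_erase hu) (Finset.ne_of_mem_erase hv)]
    have hzero_row : ∀ v : Fin n, (G'.adjMatrix ℝ) w v = 0 := by
      intro v
      simp only [SimpleGraph.adjMatrix_apply, ite_eq_right_iff]
      intro h
      have h' := SimpleGraph.deleteEdges_adj.mp h
      exact ((h'.2 ((SimpleGraph.mk'_mem_incidenceSet_iff G).mpr ⟨h'.1, Or.inl rfl⟩)).elim)
    have hzero_col : ∀ u : Fin n, (G'.adjMatrix ℝ) u w = 0 := by
      intro u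
      simp only [SimpleGraph.adjMatrix_apply, ite_eq_right_iff]
      intro h
      have h' := SimpleGraph.deleteEdges_adj.mp h
      exact ((h'.2 ((SimpleGraph.mk'_mem_incidenceSet_iff G).mpr ⟨h'.1, Or.inr rfl⟩)).elim)
    calc ∑ u ∈ univ.erase w, ∑ v ∈ univ.erase w, A u v
        = ∑ u ∈ univ.erase w, ∑ v ∈ univ.erase w, (G'.adjMatrix ℝ) u v :=
          Finset.sum_congr rfl fun u hu => Finset.sum_congr rfl fun v hv => hAG' u hu v hv
      _ = ∑ u : Fin n, ∑ v : Fin n, (G'.adjMatrix ℝ) u v := by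
          rw [← Finset.add_sum_erase _ (fun u => ∑ v, (G'.adjMatrix ℝ) u v) (mem_univ w)]
          simp only [hzero_row, Finset.sum_const_zero, zero_add]
          refine Finset.sum_congr rfl fun u hu => ?_
          rw [← Finset.add_sum_erase _ _ (mem_univ w), hzero_col, zero_add]
      _ = ∑ u : Fin n, (G'.degree u : ℝ) := Finset.sum_congr rfl fun u _ => hrow u
      _ = ((∑ u : Fin n, G'.degree u : ℕ) : ℝ) := by push_cast; ring
      _ = ((2 * G'.edgeFinset.card : ℕ) : ℝ) := by
          rw [SimpleGraph.sum_degrees_eq_twice_card_edges]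
      _ = 2 * (m:ℝ) := by rw [hedge, ← hm]; push_cast; ring
  -- numerator
  have hN : dotProduct x (A.mulVec x) = 2 * s * ((n:ℝ) - 1) + 2 * (m:ℝ) := by
    rw [dotProduct]
    rw [← Finset.add_sum_erase _ _ (mem_univ w)]
    have hrow_w : A.mulVec x w = (n:ℝ) - 1 := by
      rw [Matrix.mulVec, dotProduct]
      rw [← Finset.add_sum_erase _ _ (mem_univ w)]
      have : A w w = 0 := by simp [hAdef]
      rw [this, zero_mul, zero_add]
      have h2 : ∀ v ∈ univ.erase w, A w v * x v = 1 := by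
        intro v hv
        have hvw : v ≠ w := Finset.ne_of_mem_erase hv
        simp [hAdef, hx, hvw, hw v hvw]
      rw [Finset.sum_congr rfl h2, Finset.sum_const, nsmul_eq_mul, hcard]; ring
    have hrow_u : ∀ u ∈ univ.erase w, x u * A.mulVec x u
        = s + ∑ v ∈ univ.erase w, A u v := by
      intro u hu
      have huw : u ≠ w := Finset.ne_of_mem_erase hu
      have hxu : x u = 1 := by simp [hx, huw]
      rw [hxu, one_mul, Matrix.mulVec, dotProduct]
      rw [← Finset.add_sum_erase _ _ (mem_univ w)]
      have hAuw : A u w = 1 := by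
        simp [hAdef, (hw u huw).symm]
      have hxw : x w = s := by simp [hx]
      rw [hAuw, hxw, one_mul]
      congr 1
      refine Finset.sum_congr rfl fun v hv => ?_
      have : x v = 1 := by simp [hx, Finset.ne_of_mem_erase hv]
      rw [this, mul_one]
    rw [Finset.sum_congr rfl hrow_u, Finset.sum_add_distrib, Finset.sum_const, nsmul_eq_mul,
      hcard, h2m]
    have hxw : x w = s := by simp [hx]
    rw [hxw, hrow_w]
    ring
  -- conclude
  have hray := rayleigh_le' A hA x
  rw [hN, hD] at hray
  have hlam : lamMax G = sSup (spectrum ℝ A) := rfl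
  rw [ge_iff_le, hlam]
  have hm' : (m:ℝ)/((n:ℝ)-1) * ((n:ℝ)-1) = m := div_mul_cancel₀ _ hn1.ne'
  nlinarith [hray, hn1, hm']
end

section
/- Every finite simple graph G on n ≥ 2 vertices that has a dominating vertex satisfies S(G) ≥ 2√(n−1). -/
open Finset
open scoped BigOperators Classical

open Matrix

lemma rayleigh_aux {m : Type*} [Fintype m] [DecidableEq m] [Nonempty m]
    (A : Matrix m m ℝ) (hA : A.IsHermitian) (z : m → ℝ) :
    sInf (spectrum ℝ A) * (z ⬝ᵥ z) ≤ z ⬝ᵥ (A *ᵥ z) ∧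
      z ⬝ᵥ (A *ᵥ z) ≤ sSup (spectrum ℝ A) * (z ⬝ᵥ z) := by
  classical
  set U : Matrix m m ℝ := (hA.eigenvectorUnitary : Matrix m m ℝ) with hU
  have hUs : star U * U = 1 := Unitary.coe_star_mul_self hA.eigenvectorUnitary
  have hUss : U * star U = 1 := Unitary.coe_mul_star_self hA.eigenvectorUnitary
  set c : m → ℝ := star U *ᵥ z with hc
  have hdiag : A = U * Matrix.diagonal hA.eigenvalues * star U := by
    have := hA.spectral_theorem
    simpa [Function.comp] using this
  have hstar : star U = Uᵀ := by
    ext i j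
    simp [Matrix.star_apply]
  have hvm : z ᵥ* U = c := by
    rw [hc, hstar, Matrix.mulVec_transpose]
  have hAz : z ⬝ᵥ (A *ᵥ z) = ∑ i, hA.eigenvalues i * (c i)^2 := by
    conv_lhs => rw [hdiag]
    rw [← mulVec_mulVec, ← mulVec_mulVec, Matrix.dotProduct_mulVec (v := z) (A := U), hvm]
    simp [Matrix.mulVec_diagonal, dotProduct, mul_comm, sq, mul_assoc, mul_left_comm]
    rw [← hc]
  have hzz : z ⬝ᵥ z = ∑ i, (c i)^2 := by
    have h2 : c ⬝ᵥ c = z ⬝ᵥ z := by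
      conv_lhs => rw [hc]
      rw [Matrix.dotProduct_mulVec, Matrix.vecMul_mulVec]
      rw [show (star U)ᵀ = U from by rw [hstar, Matrix.transpose_transpose]]
      rw [hUss, Matrix.vecMul_one]
    rw [← h2]
    simp [dotProduct, sq]
  have hmem : ∀ i, hA.eigenvalues i ∈ spectrum ℝ A := fun i =>
    hA.eigenvalues_mem_spectrum_real i
  have hfin : (spectrum ℝ A).Finite := A.finite_real_spectrum
  have hbdd : BddAbove (spectrum ℝ A) := hfin.bddAbove
  have hbddb : BddBelow (spectrum ℝ A) := hfin.bddBelow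
  constructor
  · rw [hAz, hzz, Finset.mul_sum]
    apply Finset.sum_le_sum
    intro i _
    exact mul_le_mul_of_nonneg_right (csInf_le hbddb (hmem i)) (sq_nonneg _)
  · rw [hAz, hzz, Finset.mul_sum]
    apply Finset.sum_le_sum
    intro i _
    exact mul_le_mul_of_nonneg_right (le_csSup hbdd (hmem i)) (sq_nonneg _)

/-- The spread of a graph. -/
noncomputable def spread {V : Type*} [Fintype V] [DecidableEq V] (G : SimpleGraph V) : ℝ :=
  lamMax G - lamMin G

theorem stmt5 {n : ℕ} (hn : 2 ≤ n) (G : SimpleGraph (Fin n)) (w : Fin n)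
    (hw : ∀ v : Fin n, v ≠ w → G.Adj w v) :
    spread G ≥ 2 * Real.sqrt ((n : ℝ) - 1) := by
  classical
  have hn2 : (2:ℝ) ≤ (n:ℝ) := by exact_mod_cast hn
  set N : ℝ := (n:ℝ) - 1 with hNdef
  have hNpos : 0 < N := by rw [hNdef]; linarith
  set a : ℝ := Real.sqrt N with hadef
  have ha2 : a^2 = N := Real.sq_sqrt hNpos.le
  have hapos : 0 < a := Real.sqrt_pos.2 hNpos
  set A : Matrix (Fin n) (Fin n) ℝ := G.adjMatrix ℝ with hAdef
  have hA : A.IsHermitian := by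
    ext i j
    simp [hAdef, Matrix.conjTranspose_apply, G.adj_comm]
  set u : Fin n → ℝ := fun v => if v = w then a else 1 with hudef
  set d : Fin n → ℝ := fun v => if v = w then a else -1 with hddef
  have hNw : G.neighborFinset w = Finset.univ.erase w := by
    ext x
    simp only [SimpleGraph.mem_neighborFinset, Finset.mem_erase, Finset.mem_univ, and_true]
    constructor
    · intro h; exact (G.ne_of_adj h).symm
    · intro h; exact hw x h
  have hcard : ((Finset.univ.erase w).card : ℝ) = N := by
    rw [Finset.card_erase_of_mem (Finset.mem_univ w)]
    rw [Finset.card_univ, Fintype.card_fin]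
    rw [hNdef, Nat.cast_sub (by omega)]
    norm_num
  have hAu_w : (A *ᵥ u) w = N := by
    rw [hAdef, SimpleGraph.adjMatrix_mulVec_apply, hNw]
    rw [Finset.sum_congr rfl (fun x hx => show u x = 1 by
      simp [hudef, Finset.ne_of_mem_erase hx])]
    rw [Finset.sum_const, nsmul_eq_mul, mul_one, hcard]
  have hAd_w : (A *ᵥ d) w = -N := by
    rw [hAdef, SimpleGraph.adjMatrix_mulVec_apply, hNw]
    rw [Finset.sum_congr rfl (fun x hx => show d x = -1 by
      simp [hddef, Finset.ne_of_mem_erase hx])]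
    rw [Finset.sum_const, nsmul_eq_mul, mul_neg_one, hcard]
  have hterm : ∀ i, i ≠ w → (A *ᵥ u) i + (A *ᵥ d) i = 2*a := by
    intro i hi
    rw [hAdef, SimpleGraph.adjMatrix_mulVec_apply, SimpleGraph.adjMatrix_mulVec_apply,
      ← Finset.sum_add_distrib]
    have hx : ∀ x, u x + d x = if x = w then 2*a else 0 := by
      intro x
      by_cases hxw : x = w <;> simp [hudef, hddef, hxw] <;> try ring
    rw [Finset.sum_congr rfl (fun x _ => hx x), Finset.sum_ite_eq' _ w _]
    have : w ∈ G.neighborFinset i := by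
      rw [SimpleGraph.mem_neighborFinset]
      exact (hw i hi).symm
    simp [this]
  -- quadratic forms
  have split : ∀ f : Fin n → ℝ, ∑ i, f i = f w + ∑ i ∈ Finset.univ.erase w, f i := by
    intro f
    rw [← Finset.sum_erase_add Finset.univ f (Finset.mem_univ w)]
    ring
  have hqu : u ⬝ᵥ (A *ᵥ u) = a*N + ∑ i ∈ Finset.univ.erase w, (A *ᵥ u) i := by
    rw [show u ⬝ᵥ (A *ᵥ u) = ∑ i, u i * (A *ᵥ u) i from rfl, split]
    simp only [hudef, if_pos rfl]
    rw [hAu_w]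
    congr 1
    apply Finset.sum_congr rfl
    intro i hi
    simp [Finset.ne_of_mem_erase hi]
  have hqd : d ⬝ᵥ (A *ᵥ d) = -(a*N) - ∑ i ∈ Finset.univ.erase w, (A *ᵥ d) i := by
    rw [show d ⬝ᵥ (A *ᵥ d) = ∑ i, d i * (A *ᵥ d) i from rfl, split]
    simp only [hddef, if_pos rfl]
    rw [hAd_w]
    have : ∑ i ∈ Finset.univ.erase w, (fun i => d i * (A *ᵥ d) i) i
        = ∑ i ∈ Finset.univ.erase w, -((A *ᵥ d) i) := by
      apply Finset.sum_congr rfl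
      intro i hi
      simp [hddef, Finset.ne_of_mem_erase hi]
    rw [this, Finset.sum_neg_distrib]
    ring
  have hdiff : u ⬝ᵥ (A *ᵥ u) - d ⬝ᵥ (A *ᵥ d) = 4*a*N := by
    rw [hqu, hqd]
    have : ∑ i ∈ Finset.univ.erase w, (A *ᵥ u) i + ∑ i ∈ Finset.univ.erase w, (A *ᵥ d) i
        = ∑ i ∈ Finset.univ.erase w, ((A *ᵥ u) i + (A *ᵥ d) i) := by
      rw [Finset.sum_add_distrib]
    have h2 : ∑ i ∈ Finset.univ.erase w, ((A *ᵥ u) i + (A *ᵥ d) i) = N * (2*a) := by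
      rw [Finset.sum_congr rfl (fun i hi => hterm i (Finset.ne_of_mem_erase hi)),
        Finset.sum_const, nsmul_eq_mul, hcard]
    nlinarith [this, h2]
  have hu2 : u ⬝ᵥ u = 2*N := by
    rw [show u ⬝ᵥ u = ∑ i, u i * u i from rfl, split]
    simp only [hudef, if_pos rfl]
    have : ∑ i ∈ Finset.univ.erase w, (fun i => u i * u i) i
        = ∑ i ∈ Finset.univ.erase w, 1 := by
      apply Finset.sum_congr rfl
      intro i hi
      simp [hudef, Finset.ne_of_mem_erase hi]
    rw [this, Finset.sum_const, nsmul_eq_mul, mul_one, hcard]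
    nlinarith [ha2]
  have hd2 : d ⬝ᵥ d = 2*N := by
    rw [show d ⬝ᵥ d = ∑ i, d i * d i from rfl, split]
    simp only [hddef, if_pos rfl]
    have : ∑ i ∈ Finset.univ.erase w, (fun i => d i * d i) i
        = ∑ i ∈ Finset.univ.erase w, 1 := by
      apply Finset.sum_congr rfl
      intro i hi
      simp [hddef, Finset.ne_of_mem_erase hi]
    rw [this, Finset.sum_const, nsmul_eq_mul, mul_one, hcard]
    nlinarith [ha2]
  have : Nonempty (Fin n) := ⟨w⟩
  obtain ⟨_, hhi⟩ := rayleigh_aux A hA u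
  obtain ⟨hlo, _⟩ := rayleigh_aux A hA d
  rw [hu2] at hhi
  rw [hd2] at hlo
  show lamMax G - lamMin G ≥ 2 * a
  have hmax : lamMax G = sSup (spectrum ℝ A) := rfl
  have hmin : lamMin G = sInf (spectrum ℝ A) := rfl
  rw [hmax, hmin]
  nlinarith [hdiff, hNpos, hhi, hlo]
end

section
/- Let G be a finite simple graph on n ≥ 2 vertices with a dominating vertex w, and let z be a nonzero real eigenvector of A(G) for the eigenvalue λ_min(G). Then λ_min(G) ≥ −√(n−1) + (2/‖z‖²)·Σ z_i·z_j, where the sum is over all edges {i,j} of G with i ≠ w and j ≠ w. -/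
open Finset
open scoped BigOperators Classical

lemma pair_sum {n : ℕ} (z : Fin n → ℝ) (s : Finset (Sym2 (Fin n)))
    (hs : ∀ e ∈ s, ¬ e.IsDiag) :
    ∑ p ∈ (univ ×ˢ univ).filter (fun p : Fin n × Fin n => s(p.1, p.2) ∈ s), z p.1 * z p.2
      = 2 * ∑ e ∈ s, Sym2.lift ⟨fun i j => z i * z j, fun i j => mul_comm _ _⟩ e := by
  rw [Finset.mul_sum,
    ← Finset.sum_fiberwise_of_maps_to (g := fun p : Fin n × Fin n => s(p.1, p.2)) (t := s)
      (fun p hp => (Finset.mem_filter.mp hp).2)]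
  apply Finset.sum_congr rfl
  intro e he
  induction e using Sym2.ind with
  | _ x y =>
    have hxy : x ≠ y := by
      intro h; exact hs _ he (by simp [h, Sym2.mk_isDiag_iff])
    have hfib : (((univ ×ˢ univ).filter (fun p : Fin n × Fin n => s(p.1, p.2) ∈ s)).filter
        (fun p => s(p.1, p.2) = s(x, y))) = {(x, y), (y, x)} := by
      ext p
      simp only [Finset.mem_filter, Finset.mem_insert, Finset.mem_singleton,
        Finset.mem_product, Finset.mem_univ, true_and, Sym2.eq_iff, Prod.ext_iff]
      constructor
      · rintro ⟨_, (⟨h1, h2⟩ | ⟨h1, h2⟩)⟩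
        · exact Or.inl ⟨h1, h2⟩
        · exact Or.inr ⟨h1, h2⟩
      · rintro (⟨h1, h2⟩ | ⟨h1, h2⟩) <;> subst h1 <;> subst h2
        · exact ⟨by simpa using he, Or.inl ⟨rfl, rfl⟩⟩
        · exact ⟨by simpa [Sym2.eq_swap] using he, Or.inr ⟨rfl, rfl⟩⟩
    rw [hfib, Finset.sum_pair (by simp [Prod.ext_iff, hxy, hxy.symm])]
    simp [Sym2.lift_mk]
    ring

theorem stmt6 {n : ℕ} (hn : 2 ≤ n) (G : SimpleGraph (Fin n)) (w : Fin n)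
    (hw : ∀ v : Fin n, v ≠ w → G.Adj w v)
    (z : Fin n → ℝ) (hz : z ≠ 0)
    (heig : (G.adjMatrix ℝ).mulVec z = lamMin G • z) :
    lamMin G ≥ -Real.sqrt ((n : ℝ) - 1) +
      (2 / ∑ i, z i ^ 2) *
        ∑ e ∈ G.edgeFinset.filter (fun e => w ∉ e),
          Sym2.lift ⟨fun i j => z i * z j, fun i j => mul_comm _ _⟩ e := by
  set lam := lamMin G with hlam
  set N := ∑ i, z i ^ 2 with hNdef
  set S := ∑ e ∈ G.edgeFinset.filter (fun e => w ∉ e),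
      Sym2.lift ⟨fun i j => z i * z j, fun i j => mul_comm _ _⟩ e with hSdef
  -- positivity of N
  have hN : 0 < N := by
    obtain ⟨i, hi⟩ : ∃ i, z i ≠ 0 := by
      by_contra h; push_neg at h; exact hz (funext h)
    exact Finset.sum_pos' (fun j _ => sq_nonneg _) ⟨i, Finset.mem_univ i, by positivity⟩
  -- eigen rows
  have hrow : ∀ i, ∑ j ∈ G.neighborFinset i, z j = lam * z i := by
    intro i
    have := congrFun heig i
    rwa [SimpleGraph.adjMatrix_mulVec_apply, Pi.smul_apply, smul_eq_mul] at this
  have hnbrw : G.neighborFinset w = univ.erase w := by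
    ext v
    simp only [SimpleGraph.mem_neighborFinset, Finset.mem_erase, Finset.mem_univ, and_true]
    exact ⟨fun h => h.ne', fun h => hw v h⟩
  have ha : ∑ v ∈ univ.erase w, z v = lam * z w := by rw [← hnbrw]; exact hrow w
  -- key identity: 2 * S = lam * N - 2 * lam * z w ^ 2
  have hps := pair_sum z (G.edgeFinset.filter (fun e => w ∉ e))
    (fun e he => G.not_isDiag_of_mem_edgeSet
      (SimpleGraph.mem_edgeFinset.mp (Finset.mem_filter.mp he).1))
  have hcond : ∀ p : Fin n × Fin n,
      (s(p.1, p.2) ∈ G.edgeFinset.filter (fun e => w ∉ e)) ↔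
        (G.Adj p.1 p.2 ∧ p.1 ≠ w ∧ p.2 ≠ w) := by
    intro p
    simp only [Finset.mem_filter, SimpleGraph.mem_edgeFinset, SimpleGraph.mem_edgeSet,
      Sym2.mem_iff, not_or]
    tauto
  have hsplit : ∑ p ∈ (univ ×ˢ univ).filter
        (fun p : Fin n × Fin n => s(p.1, p.2) ∈ G.edgeFinset.filter (fun e => w ∉ e)),
        z p.1 * z p.2
      = ∑ i, ∑ j ∈ univ.filter (fun j => G.Adj i j ∧ i ≠ w ∧ j ≠ w), z i * z j := by
    rw [Finset.sum_filter, Finset.sum_product]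
    apply Finset.sum_congr rfl
    intro i _
    rw [Finset.sum_filter]
    apply Finset.sum_congr rfl
    intro j _
    exact if_congr (hcond (i, j)) rfl rfl
  -- compute the row sums on the right
  have hrows : ∀ i, i ≠ w →
      ∑ j ∈ univ.filter (fun j => G.Adj i j ∧ i ≠ w ∧ j ≠ w), z i * z j
        = z i * (lam * z i - z w) := by
    intro i hi
    have hset : univ.filter (fun j => G.Adj i j ∧ i ≠ w ∧ j ≠ w)
        = (G.neighborFinset i).erase w := by
      ext j
      simp only [Finset.mem_filter, Finset.mem_univ, true_and, Finset.mem_erase,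
        SimpleGraph.mem_neighborFinset]
      constructor
      · rintro ⟨h1, _, h3⟩; exact ⟨h3, h1⟩
      · rintro ⟨h1, h2⟩; exact ⟨h2, hi, h1⟩
    have hwmem : w ∈ G.neighborFinset i := by
      rw [SimpleGraph.mem_neighborFinset]; exact (hw i hi).symm
    rw [hset, ← Finset.mul_sum, Finset.sum_erase_eq_sub hwmem, hrow i]
  have hroww : ∑ j ∈ univ.filter (fun j => G.Adj w j ∧ w ≠ w ∧ j ≠ w), z w * z j = 0 := by
    simp
  have hDS : 2 * S = lam * N - 2 * lam * z w ^ 2 := by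
    rw [← hps, hsplit]
    have : ∑ i, ∑ j ∈ univ.filter (fun j => G.Adj i j ∧ i ≠ w ∧ j ≠ w), z i * z j
        = ∑ i ∈ univ.erase w, z i * (lam * z i - z w) := by
      rw [← Finset.add_sum_erase _ _ (Finset.mem_univ w), hroww, zero_add]
      exact Finset.sum_congr rfl (fun i hi => hrows i (Finset.mem_erase.mp hi).1)
    rw [this]
    have hNe : ∑ i ∈ univ.erase w, z i ^ 2 = N - z w ^ 2 := by
      rw [hNdef, Finset.sum_erase_eq_sub (Finset.mem_univ w)]
    have h1 : ∑ i ∈ univ.erase w, z i * (lam * z i - z w)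
        = ∑ i ∈ univ.erase w, (lam * z i ^ 2 - z i * z w) :=
      Finset.sum_congr rfl (fun i _ => by ring)
    rw [h1, Finset.sum_sub_distrib, ← Finset.mul_sum, ← Finset.sum_mul, hNe, ha]
    ring
  -- Cauchy–Schwarz bound
  have hcard : (univ.erase w).card = n - 1 := by
    rw [Finset.card_erase_of_mem (Finset.mem_univ w), Finset.card_univ, Fintype.card_fin]
  have hcardR : ((univ.erase w).card : ℝ) = (n : ℝ) - 1 := by
    rw [hcard, Nat.cast_sub (by omega)]; simp
  have hNe : ∑ i ∈ univ.erase w, z i ^ 2 = N - z w ^ 2 := by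
    rw [hNdef, Finset.sum_erase_eq_sub (Finset.mem_univ w)]
  have hCS : (lam * z w) ^ 2 ≤ ((n : ℝ) - 1) * (N - z w ^ 2) := by
    rw [← ha, ← hcardR, ← hNe]
    exact sq_sum_le_card_mul_sum_sq
  have hn1 : (1 : ℝ) ≤ (n : ℝ) - 1 := by
    have : (2 : ℝ) ≤ (n : ℝ) := by exact_mod_cast hn
    linarith
  set s := Real.sqrt ((n : ℝ) - 1) with hsq
  have hs1 : 1 ≤ s :=
    le_trans (by rw [Real.sqrt_one]) (Real.sqrt_le_sqrt hn1)
  have hs2 : s ^ 2 = (n : ℝ) - 1 := Real.sq_sqrt (by linarith)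
  have h2 : -s * N ≤ 2 * lam * z w ^ 2 := by
    nlinarith [sq_nonneg (s * z w + lam * z w), sq_nonneg (z w), hCS, hs1, hN,
      sq_nonneg (s * z w - lam * z w)]
  -- finish
  have hfrac : (2 / N) * S = lam - 2 * lam * z w ^ 2 / N := by
    field_simp
    linarith [hDS]
  rw [ge_iff_le, hfrac]
  have hdiv : -s ≤ 2 * lam * z w ^ 2 / N := by
    rw [le_div_iff₀ hN]; linarith
  linarith
end

section
/- Let G be a finite simple graph on n ≥ 2 vertices with a dominating vertex w, and let x be a nonzero real eigenvector of A(G) for the eigenvalue λ_max(G). Then λ_max(G) ≤ √(n−1) + (2/‖x‖²)·Σ x_i·x_j, where the sum is over all edges {i,j} of G with i ≠ w and j ≠ w. -/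
open Finset
open scoped BigOperators Classical

lemma key {n : ℕ} (G : SimpleGraph (Fin n)) (w : Fin n) (x : Fin n → ℝ) :
    ∑ i ∈ univ.erase w, ∑ j ∈ univ.erase w, (G.adjMatrix ℝ) i j * (x i * x j)
      = 2 * ∑ e ∈ G.edgeFinset.filter (fun e => w ∉ e),
          Sym2.lift ⟨fun i j => x i * x j, fun i j => mul_comm _ _⟩ e := by
  classical
  set P : Finset (Fin n × Fin n) :=
    ((univ.erase w) ×ˢ (univ.erase w)).filter (fun p => G.Adj p.1 p.2) with hP
  have hL : ∑ i ∈ univ.erase w, ∑ j ∈ univ.erase w, (G.adjMatrix ℝ) i j * (x i * x j)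
      = ∑ p ∈ P, x p.1 * x p.2 := by
    rw [hP, Finset.sum_filter, Finset.sum_product]
    refine Finset.sum_congr rfl fun i _ => Finset.sum_congr rfl fun j _ => ?_
    by_cases h : G.Adj i j <;> simp [h]
  rw [hL]
  set T := G.edgeFinset.filter (fun e => w ∉ e) with hT
  have hmaps : ∀ p ∈ P, s(p.1, p.2) ∈ T := by
    rintro ⟨i, j⟩ hp
    simp only [hP, Finset.mem_filter, Finset.mem_product, Finset.mem_erase] at hp
    simp only [hT, Finset.mem_filter, SimpleGraph.mem_edgeFinset, SimpleGraph.mem_edgeSet,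
      Sym2.mem_iff]
    exact ⟨hp.2, by push_neg; exact ⟨fun h => hp.1.1.1 h.symm, fun h => hp.1.2.1 h.symm⟩⟩
  rw [← Finset.sum_fiberwise_of_maps_to hmaps (fun p => x p.1 * x p.2), Finset.mul_sum]
  refine Finset.sum_congr rfl fun e he => ?_
  induction e using Sym2.ind with
  | _ a b =>
    simp only [hT, Finset.mem_filter, SimpleGraph.mem_edgeFinset, SimpleGraph.mem_edgeSet,
      Sym2.mem_iff] at he
    obtain ⟨hab, hwe⟩ := he
    push_neg at hwe
    have hfib : P.filter (fun p => s(p.1, p.2) = s(a, b)) = {(a, b), (b, a)} := by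
      ext ⟨i, j⟩
      simp only [hP, Finset.mem_filter, Finset.mem_product, Finset.mem_erase, Finset.mem_univ,
        and_true, Finset.mem_insert, Finset.mem_singleton, Prod.mk.injEq, Sym2.eq, Sym2.rel_iff',
        Prod.swap_prod_mk]
      constructor
      · rintro ⟨_, h | h⟩
        · exact Or.inl ⟨h.1, h.2⟩
        · exact Or.inr ⟨h.1, h.2⟩
      · rintro (⟨hi, hj⟩ | ⟨hi, hj⟩)
        · subst hi; subst hj
          exact ⟨⟨⟨fun h => hwe.1 h.symm, fun h => hwe.2 h.symm⟩, hab⟩, Or.inl ⟨rfl, rfl⟩⟩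
        · subst hi; subst hj
          exact ⟨⟨⟨fun h => hwe.2 h.symm, fun h => hwe.1 h.symm⟩, hab.symm⟩, Or.inr ⟨rfl, rfl⟩⟩
    rw [hfib]
    have hne : ((a, b) : Fin n × Fin n) ≠ (b, a) := by
      intro h
      exact G.ne_of_adj hab (congrArg Prod.fst h)
    rw [Finset.sum_insert (by simpa using hne), Finset.sum_singleton]
    simp [Sym2.lift_mk]
    ring

theorem stmt7 {n : ℕ} (hn : 2 ≤ n) (G : SimpleGraph (Fin n)) (w : Fin n)
    (hw : ∀ v : Fin n, v ≠ w → G.Adj w v)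
    (x : Fin n → ℝ) (hx : x ≠ 0)
    (heig : (G.adjMatrix ℝ).mulVec x = lamMax G • x) :
    lamMax G ≤ Real.sqrt ((n : ℝ) - 1) +
      (2 / ∑ i, x i ^ 2) *
        ∑ e ∈ G.edgeFinset.filter (fun e => w ∉ e),
          Sym2.lift ⟨fun i j => x i * x j, fun i j => mul_comm _ _⟩ e := by
  classical
  set lam := lamMax G with hlam
  set S := ∑ e ∈ G.edgeFinset.filter (fun e => w ∉ e),
      Sym2.lift ⟨fun i j => x i * x j, fun i j => mul_comm _ _⟩ e with hS
  set X := ∑ i, x i ^ 2 with hX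
  have hXpos : 0 < X := by
    obtain ⟨i, hi⟩ := Function.ne_iff.mp hx
    exact Finset.sum_pos' (fun j _ => sq_nonneg _) ⟨i, Finset.mem_univ i, (sq_nonneg _).lt_of_ne (Ne.symm (pow_ne_zero 2 hi))⟩
  have hQ : ∑ i, ∑ j, (G.adjMatrix ℝ) i j * (x i * x j) = lam * X := by
    have h1 : ∀ i, ∑ j, (G.adjMatrix ℝ) i j * (x i * x j)
        = x i * ((G.adjMatrix ℝ).mulVec x i) := by
      intro i
      simp only [Matrix.mulVec, dotProduct, Finset.mul_sum]
      exact Finset.sum_congr rfl fun j _ => by ring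
    simp only [h1, heig, Pi.smul_apply, smul_eq_mul, hX]
    rw [Finset.mul_sum]
    exact Finset.sum_congr rfl fun i _ => by ring
  set s := ∑ j ∈ univ.erase w, x j with hs
  set Y := ∑ j ∈ univ.erase w, x j ^ 2 with hY
  have hrow : ∑ j, (G.adjMatrix ℝ) w j * (x w * x j) = x w * s := by
    rw [← Finset.add_sum_erase _ _ (Finset.mem_univ w)]
    have hAw : (G.adjMatrix ℝ) w w = 0 := by simp
    rw [hAw, zero_mul, zero_add, hs, Finset.mul_sum]
    refine Finset.sum_congr rfl fun j hj => ?_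
    have : (G.adjMatrix ℝ) w j = 1 := by
      simp [hw j (Finset.ne_of_mem_erase hj)]
    rw [this]; ring
  have hcol : ∑ i ∈ univ.erase w, (G.adjMatrix ℝ) i w * (x i * x w) = x w * s := by
    rw [hs, Finset.mul_sum]
    refine Finset.sum_congr rfl fun i hi => ?_
    have : (G.adjMatrix ℝ) i w = 1 := by
      simp [(hw i (Finset.ne_of_mem_erase hi)).symm]
    rw [this]; ring
  have hsplit : lam * X = 2 * (x w * s) + 2 * S := by
    rw [← hQ, ← Finset.add_sum_erase _ (fun i => ∑ j, (G.adjMatrix ℝ) i j * (x i * x j))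
      (Finset.mem_univ w), hrow]
    have h2 : ∀ i ∈ univ.erase w, ∑ j, (G.adjMatrix ℝ) i j * (x i * x j)
        = (G.adjMatrix ℝ) i w * (x i * x w)
          + ∑ j ∈ univ.erase w, (G.adjMatrix ℝ) i j * (x i * x j) := by
      intro i _
      rw [← Finset.add_sum_erase _ _ (Finset.mem_univ w)]
    rw [Finset.sum_congr rfl h2, Finset.sum_add_distrib, hcol, key G w x, hS]
    ring
  have hn1 : (0:ℝ) ≤ (n:ℝ) - 1 := by
    have : (1:ℝ) ≤ (n:ℝ) := by exact_mod_cast Nat.one_le_of_lt hn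
    linarith
  have hY0 : 0 ≤ Y := Finset.sum_nonneg fun j _ => sq_nonneg _
  have hcs : s ^ 2 ≤ ((n:ℝ) - 1) * Y := by
    have h := Finset.sum_mul_sq_le_sq_mul_sq (univ.erase w) (fun _ => (1:ℝ)) x
    simp only [one_mul, one_pow] at h
    have hcard : ∑ _j ∈ univ.erase w, (1:ℝ) = (n:ℝ) - 1 := by
      have h1 : (1:ℕ) ≤ n := Nat.one_le_of_lt hn
      rw [Finset.sum_const, Finset.card_erase_of_mem (Finset.mem_univ w), Finset.card_univ,
        Fintype.card_fin, nsmul_eq_mul, Nat.cast_sub h1, Nat.cast_one, mul_one]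
    rw [hcard] at h
    exact h
  have hXsplit : X = x w ^ 2 + Y := by
    rw [hX, hY, ← Finset.add_sum_erase _ _ (Finset.mem_univ w)]
  have habs : |s| ≤ Real.sqrt ((n:ℝ) - 1) * Real.sqrt Y := by
    rw [← Real.sqrt_mul hn1]
    calc |s| = Real.sqrt (s ^ 2) := (Real.sqrt_sq_eq_abs s).symm
      _ ≤ Real.sqrt (((n:ℝ) - 1) * Y) := Real.sqrt_le_sqrt hcs
  have h4 : 2 * (|x w| * Real.sqrt Y) ≤ x w ^ 2 + Y := by
    nlinarith [sq_nonneg (|x w| - Real.sqrt Y), Real.sq_sqrt hY0, sq_abs (x w)]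
  have hbound : 2 * (x w * s) ≤ Real.sqrt ((n:ℝ) - 1) * X := by
    have h2 : x w * s ≤ |x w| * |s| := by
      calc x w * s ≤ |x w * s| := le_abs_self _
        _ = |x w| * |s| := abs_mul _ _
    have h3 : |x w| * |s| ≤ |x w| * (Real.sqrt ((n:ℝ) - 1) * Real.sqrt Y) :=
      mul_le_mul_of_nonneg_left habs (abs_nonneg _)
    have h5 : 2 * (|x w| * (Real.sqrt ((n:ℝ) - 1) * Real.sqrt Y))
        ≤ Real.sqrt ((n:ℝ) - 1) * (x w ^ 2 + Y) := by
      nlinarith [Real.sqrt_nonneg ((n:ℝ) - 1)]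
    rw [hXsplit]
    linarith
  have hfinal : lam * X ≤ Real.sqrt ((n:ℝ) - 1) * X + 2 * S := by
    rw [hsplit]; linarith
  have hle : lam ≤ (Real.sqrt ((n:ℝ) - 1) * X + 2 * S) / X := by
    rw [le_div_iff₀ hXpos]; linarith
  calc lam ≤ (Real.sqrt ((n:ℝ) - 1) * X + 2 * S) / X := hle
    _ = Real.sqrt ((n:ℝ) - 1) + (2 / X) * S := by
      field_simp
end

section
/- There exist a constant C > 0 and an integer N such that the following holds for all n ≥ N. Let G be a finite simple graph on n vertices with a dominating vertex w, in which every two distinct vertices have at most two common neighbors and e(G) ≤ 2n − 3. Let μ be an eigenvalue of A(G) with √(n−1) − 2 ≤ |μ| ≤ √(n−1) + 2, and let z be a corresponding real eigenvector normalized so that z_w = 1 and max_u |z_u| = 1. Then for every vertex u ≠ w, |z_u − 1/μ − (d_u − 1)/μ²| ≤ C/n^{3/2}. -/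
open Finset
open scoped BigOperators Classical

theorem stmt14 :
    ∃ C : ℝ, 0 < C ∧ ∃ N : ℕ, ∀ n : ℕ, N ≤ n →
      ∀ G : SimpleGraph (Fin n), ∀ w : Fin n,
        (∀ v : Fin n, v ≠ w → G.Adj w v) →
        (∀ u v : Fin n, u ≠ v →
          (G.neighborFinset u ∩ G.neighborFinset v).card ≤ 2) →
        ((G.edgeFinset.card : ℝ) ≤ 2 * (n : ℝ) - 3) →
        ∀ μ : ℝ, ∀ z : Fin n → ℝ,
          (G.adjMatrix ℝ).mulVec z = μ • z →
          z w = 1 →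
          (∀ u : Fin n, |z u| ≤ 1) →
          Real.sqrt ((n : ℝ) - 1) - 2 ≤ |μ| →
          |μ| ≤ Real.sqrt ((n : ℝ) - 1) + 2 →
          ∀ u : Fin n, u ≠ w →
            |z u - 1 / μ - ((G.degree u : ℝ) - 1) / μ ^ 2| ≤
              C / (n : ℝ) ^ ((3 : ℝ) / 2) := by
  refine ⟨100, by norm_num, 36, ?_⟩
  intro n hn G w hdom hcap _ μ z heig hzw hzb hμlo _ u hu
  have hn36 : (36:ℝ) ≤ (n:ℝ) := by exact_mod_cast hn
  have hsq : Real.sqrt (n:ℝ) ^ 2 = (n:ℝ) := Real.sq_sqrt (by linarith)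
  have hn6 : (6:ℝ) ≤ Real.sqrt (n:ℝ) := by
    nlinarith [Real.sqrt_nonneg (n:ℝ)]
  have hs1 : Real.sqrt (n:ℝ) - 1 ≤ Real.sqrt ((n:ℝ) - 1) := by
    nlinarith [Real.sq_sqrt (show (0:ℝ) ≤ (n:ℝ) - 1 by linarith),
      Real.sqrt_nonneg ((n:ℝ)-1), Real.sqrt_nonneg (n:ℝ)]
  have hμn : Real.sqrt (n:ℝ) / 2 ≤ |μ| := by linarith
  have hμpos : 0 < |μ| := lt_of_lt_of_le (by linarith) hμn
  have hμ0 : μ ≠ 0 := abs_pos.mp hμpos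
  -- w is a neighbor of every x ≠ w
  have hwmem : ∀ x : Fin n, x ≠ w → w ∈ G.neighborFinset x := by
    intro x hx
    rw [SimpleGraph.mem_neighborFinset]
    exact (hdom x hx).symm
  -- degree bound: for x ≠ w, at most 2 neighbors besides w
  have hcard : ∀ x : Fin n, x ≠ w → ((G.neighborFinset x).erase w).card ≤ 2 := by
    intro x hx
    have hsub : (G.neighborFinset x).erase w ⊆ G.neighborFinset x ∩ G.neighborFinset w := by
      intro y hy
      simp only [Finset.mem_erase, SimpleGraph.mem_neighborFinset] at hy
      simp only [Finset.mem_inter, SimpleGraph.mem_neighborFinset]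
      exact ⟨hy.2, hdom y hy.1⟩
    exact le_trans (Finset.card_le_card hsub) (hcap x w hx)
  -- eigen equation pointwise
  have heq : ∀ x : Fin n, ∑ v ∈ G.neighborFinset x, z v = μ * z x := by
    intro x
    have h := congrFun heig x
    rw [SimpleGraph.adjMatrix_mulVec_apply] at h
    simpa using h
  set T : Fin n → ℝ := fun x => ∑ v ∈ (G.neighborFinset x).erase w, z v with hT
  have key : ∀ x : Fin n, x ≠ w → 1 + T x = μ * z x := by
    intro x hx
    have h := heq x
    rw [← Finset.add_sum_erase _ z (hwmem x hx), hzw] at h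
    exact h
  -- crude bound |T x| ≤ 2
  have hT2 : ∀ x : Fin n, x ≠ w → |T x| ≤ 2 := by
    intro x hx
    calc |T x| ≤ ∑ v ∈ (G.neighborFinset x).erase w, |z v| :=
          Finset.abs_sum_le_sum_abs _ _
      _ ≤ ((G.neighborFinset x).erase w).card • (1:ℝ) :=
          Finset.sum_le_card_nsmul _ _ 1 (fun v _ => hzb v)
      _ ≤ 2 := by
          rw [nsmul_eq_mul, mul_one]
          exact_mod_cast hcard x hx
  -- refined bound |z x| ≤ 3/|μ|
  have hz3 : ∀ x : Fin n, x ≠ w → |z x| ≤ 3 / |μ| := by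
    intro x hx
    rw [le_div_iff₀ hμpos]
    have h : |z x| * |μ| = |1 + T x| := by
      rw [← abs_mul, mul_comm, key x hx, abs_mul, mul_comm]
    rw [h]
    calc |1 + T x| ≤ |(1:ℝ)| + |T x| := abs_add_le _ _
      _ ≤ 1 + 2 := by
          have := hT2 x hx
          simp only [abs_one]
          linarith
      _ = 3 := by norm_num
  -- refined bound |T x| ≤ 6/|μ|
  have hT6 : ∀ x : Fin n, x ≠ w → |T x| ≤ 6 / |μ| := by
    intro x hx
    calc |T x| ≤ ∑ v ∈ (G.neighborFinset x).erase w, |z v| :=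
          Finset.abs_sum_le_sum_abs _ _
      _ ≤ ((G.neighborFinset x).erase w).card • (3 / |μ|) := by
          refine Finset.sum_le_card_nsmul _ _ _ (fun v hv => ?_)
          exact hz3 v (Finset.mem_erase.mp hv).1
      _ ≤ 2 * (3 / |μ|) := by
          rw [nsmul_eq_mul]
          have h2 : (((G.neighborFinset x).erase w).card : ℝ) ≤ 2 := by
            exact_mod_cast hcard x hx
          have h3 : (0:ℝ) ≤ 3 / |μ| := by positivity
          nlinarith
      _ = 6 / |μ| := by ring
  -- degree / card relation
  have hd1 : ((((G.neighborFinset u).erase w).card : ℕ) : ℝ) = (G.degree u : ℝ) - 1 := by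
    rw [Finset.card_erase_of_mem (hwmem u hu)]
    have hdeg : 1 ≤ G.degree u := by
      rw [← SimpleGraph.card_neighborFinset_eq_degree]
      exact Finset.card_pos.mpr ⟨w, hwmem u hu⟩
    rw [← SimpleGraph.card_neighborFinset_eq_degree]
    rw [← SimpleGraph.card_neighborFinset_eq_degree] at hdeg
    push_cast [Nat.cast_sub hdeg]
    ring
  set S : ℝ := ∑ v ∈ (G.neighborFinset u).erase w, T v with hS
  have hμT : μ * T u = ((G.degree u : ℝ) - 1) + S := by
    rw [hT, Finset.mul_sum]
    have hrw : ∀ v ∈ (G.neighborFinset u).erase w, μ * z v = 1 + T v := by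
      intro v hv
      exact (key v (Finset.mem_erase.mp hv).1).symm
    rw [Finset.sum_congr rfl hrw, Finset.sum_add_distrib, Finset.sum_const,
      nsmul_eq_mul, mul_one, hd1]
  have h2 : μ ^ 2 * z u = μ + (((G.degree u : ℝ) - 1) + S) := by
    calc μ ^ 2 * z u = μ * (μ * z u) := by ring
      _ = μ * (1 + T u) := by rw [← key u hu]
      _ = μ + μ * T u := by ring
      _ = μ + (((G.degree u : ℝ) - 1) + S) := by rw [hμT]
  have key2 : z u - 1 / μ - ((G.degree u : ℝ) - 1) / μ ^ 2 = S / μ ^ 2 := by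
    field_simp
    linear_combination h2
  have hSb : |S| ≤ 12 / |μ| := by
    calc |S| ≤ ∑ v ∈ (G.neighborFinset u).erase w, |T v| :=
          Finset.abs_sum_le_sum_abs _ _
      _ ≤ ((G.neighborFinset u).erase w).card • (6 / |μ|) := by
          refine Finset.sum_le_card_nsmul _ _ _ (fun v hv => ?_)
          exact hT6 v (Finset.mem_erase.mp hv).1
      _ ≤ 2 * (6 / |μ|) := by
          rw [nsmul_eq_mul]
          have h2' : (((G.neighborFinset u).erase w).card : ℝ) ≤ 2 := by
            exact_mod_cast hcard u hu
          have h3 : (0:ℝ) ≤ 6 / |μ| := by positivity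
          nlinarith
      _ = 12 / |μ| := by ring
  have hpow : (n:ℝ) ^ ((3:ℝ)/2) = Real.sqrt (n:ℝ) ^ 3 := by
    rw [show ((3:ℝ)/2) = (1/2) * ((3:ℕ):ℝ) by norm_num,
      Real.rpow_mul (by positivity), Real.rpow_natCast, ← Real.sqrt_eq_rpow]
  have hμ3 : Real.sqrt (n:ℝ) ^ 3 / 8 ≤ |μ| ^ 3 := by
    have := pow_le_pow_left₀ (by positivity) hμn 3
    calc Real.sqrt (n:ℝ) ^ 3 / 8 = (Real.sqrt (n:ℝ) / 2) ^ 3 := by ring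
      _ ≤ |μ| ^ 3 := this
  have hs3pos : 0 < Real.sqrt (n:ℝ) ^ 3 := by positivity
  calc |z u - 1 / μ - ((G.degree u : ℝ) - 1) / μ ^ 2| = |S| / |μ| ^ 2 := by
        rw [key2, abs_div, abs_pow]
    _ ≤ (12 / |μ|) / |μ| ^ 2 := by gcongr
    _ = 12 / |μ| ^ 3 := by
        rw [div_div, ← pow_succ']
    _ ≤ 96 / Real.sqrt (n:ℝ) ^ 3 := by
        rw [div_le_div_iff₀ (by positivity) hs3pos]
        nlinarith [pow_pos hμpos 3]
    _ ≤ 100 / (n:ℝ) ^ ((3:ℝ)/2) := by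
        rw [hpow]
        gcongr
        norm_num
end

section
/- There exist a constant C > 0 and an integer N such that the following holds for all n ≥ N. Let G be a finite simple graph on n vertices with a dominating vertex w, in which every two distinct vertices have at most two common neighbors and e(G) ≤ 2n − 3, and let m be the number of edges of G not incident to w. Suppose √(n−1) − 2 ≤ −λ_min(G) ≤ √(n−1) + 2 and that some real eigenvector z of A(G) for λ_min(G) satisfies z_w = 1 and max_u |z_u| = 1. Then |λ_min(G) + √(n−1) − m/(n−1)| ≤ C·m/n^{3/2}. -/
open Finset
open scoped BigOperators Classical

set_option maxHeartbeats 1000000 in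
lemma endgame15 (nr L m : ℝ) (hn1 : (101:ℝ) ≤ nr) (hm0 : 0 ≤ m)
    (hlo : Real.sqrt (nr-1) - 2 ≤ -L) (hhi : -L ≤ Real.sqrt (nr-1) + 2)
    (hX : |L^2 * (L^2 - (nr-1)) - 2*m*L| ≤ 12*m) :
    |L + Real.sqrt (nr-1) - m/(nr-1)| ≤ 100 * m / nr^((3:ℝ)/2) := by
  set s := Real.sqrt (nr-1) with hsdef
  have hs0 : (0:ℝ) ≤ s := Real.sqrt_nonneg _
  have hs2 : s^2 = nr - 1 := Real.sq_sqrt (by linarith)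
  have hs10 : (10:ℝ) ≤ s := by nlinarith
  have hLhi2 : L ≤ -s + 2 := by linarith
  have hLlo2 : -s - 2 ≤ L := by linarith
  set T := L + s - m/(nr-1) with hT
  set P := s^2 * L^2 * (s - L) with hPdef
  have e1 : (s-2)^2 ≤ L^2 := by nlinarith
  have e2 : 2*s - 2 ≤ s - L := by linarith
  have hspos : (0:ℝ) < s := by linarith
  have hP : s^5 ≤ P := by
    have h3 : s^2*((s-2)^2*(2*s-2)) ≤ s^2*(L^2*(s-L)) := by
      refine mul_le_mul_of_nonneg_left ?_ (sq_nonneg s)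
      exact mul_le_mul e1 e2 (by linarith) (sq_nonneg L)
    have h4 : s^5 ≤ s^2*((s-2)^2*(2*s-2)) := by
      nlinarith [mul_nonneg (pow_nonneg hs0 4) (by linarith : (0:ℝ) ≤ s - 10),
        mul_nonneg (sq_nonneg s) (by linarith : (0:ℝ) ≤ 16*s - 8)]
    calc s^5 ≤ s^2*((s-2)^2*(2*s-2)) := h4
      _ ≤ s^2*(L^2*(s-L)) := h3
      _ = P := by rw [hPdef]; ring
  have hPpos : (0:ℝ) < P := lt_of_lt_of_le (pow_pos hspos 5) hP
  have hTP : T * P = m*L*(L-2*s)*(L+s) - s^2*(L^2*(L^2-(nr-1)) - 2*m*L) := by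
    have hn1s : nr - 1 = s^2 := hs2.symm
    rw [hT, hPdef, hn1s]
    have hsne : s ≠ 0 := by linarith
    field_simp
    ring
  have hb1 : |L| ≤ s + 2 := abs_le.2 ⟨by linarith, by linarith⟩
  have hb2 : |L - 2*s| ≤ 3*s + 2 := abs_le.2 ⟨by linarith, by linarith⟩
  have hb3 : |L + s| ≤ 2 := abs_le.2 ⟨by linarith, by linarith⟩
  have habs2 : |T * P| ≤ 20 * m * s^2 := by
    rw [hTP]
    calc |m*L*(L-2*s)*(L+s) - s^2*(L^2*(L^2-(nr-1)) - 2*m*L)|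
        ≤ |m*L*(L-2*s)*(L+s)| + |s^2*(L^2*(L^2-(nr-1)) - 2*m*L)| := abs_sub _ _
      _ ≤ m*(s+2)*((3*s+2)*2) + s^2*(12*m) := by
          refine add_le_add ?_ ?_
          · rw [abs_mul, abs_mul, abs_mul, abs_of_nonneg hm0]
            have hc1 : |L - 2*s| * |L + s| ≤ (3*s+2)*2 :=
              mul_le_mul hb2 hb3 (abs_nonneg _) (by linarith)
            have hc2 : m * |L| ≤ m * (s+2) :=
              mul_le_mul_of_nonneg_left hb1 hm0
            calc m * |L| * |L - 2*s| * |L + s|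
                = (m * |L|) * (|L - 2*s| * |L + s|) := by ring
              _ ≤ (m * (s+2)) * ((3*s+2)*2) := by
                  refine mul_le_mul hc2 hc1 ?_ ?_
                  · positivity
                  · exact mul_nonneg hm0 (by linarith)
              _ = m*(s+2)*((3*s+2)*2) := by ring
          · rw [abs_mul, abs_of_nonneg (sq_nonneg s)]
            exact mul_le_mul_of_nonneg_left hX (sq_nonneg s)
      _ ≤ 20 * m * s^2 := by
          nlinarith [mul_nonneg hm0 (mul_nonneg hs0 (by linarith : (0:ℝ) ≤ s-10)),
            mul_nonneg hm0 (by linarith : (0:ℝ) ≤ s-10), hm0]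
  have habs : |T| * s^5 ≤ 20 * m * s^2 := by
    calc |T| * s^5 ≤ |T| * P := mul_le_mul_of_nonneg_left hP (abs_nonneg T)
      _ = |T * P| := by rw [abs_mul, abs_of_pos hPpos]
      _ ≤ 20 * m * s^2 := habs2
  have hs2pos : (0:ℝ) < s^2 := pow_pos hspos 2
  have h5 : |T| * s^3 ≤ 20 * m := by nlinarith [habs, hs2pos, abs_nonneg T]
  have ht3 : nr^((3:ℝ)/2) = (Real.sqrt nr)^3 := by
    rw [Real.sqrt_eq_rpow, ← Real.rpow_natCast (nr^((1:ℝ)/2)) 3,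
      ← Real.rpow_mul (by linarith)]
    norm_num
  set t := Real.sqrt nr with htdef
  have ht0 : (0:ℝ) ≤ t := Real.sqrt_nonneg _
  have ht2 : t^2 = nr := Real.sq_sqrt (by linarith)
  have hts : t ≤ (6/5)*s := by
    calc t = Real.sqrt nr := htdef
      _ ≤ Real.sqrt ((6/5)^2*(nr-1)) := Real.sqrt_le_sqrt (by nlinarith)
      _ = (6/5)*s := by
          rw [Real.sqrt_mul (by norm_num), Real.sqrt_sq (by norm_num), hsdef]
  have h6 : t^3 ≤ 2 * s^3 := by
    have h61 : t^3 ≤ ((6/5)*s)^3 := pow_le_pow_left₀ ht0 hts 3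
    nlinarith [h61, pow_nonneg hs0 3]
  have htpos : (0:ℝ) < t := by nlinarith
  have hfin : |T| ≤ 100 * m / t^3 := by
    rw [le_div_iff₀ (pow_pos htpos 3)]
    calc |T| * t^3 ≤ |T| * (2*s^3) := mul_le_mul_of_nonneg_left h6 (abs_nonneg T)
      _ = 2 * (|T| * s^3) := by ring
      _ ≤ 2 * (20*m) := by linarith
      _ ≤ 100 * m := by linarith
  rw [ht3]
  exact hfin

set_option maxHeartbeats 1000000 in
theorem stmt15 :
    ∃ C : ℝ, 0 < C ∧ ∃ N : ℕ, ∀ n : ℕ, N ≤ n →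
      ∀ G : SimpleGraph (Fin n), ∀ w : Fin n,
        (∀ v : Fin n, v ≠ w → G.Adj w v) →
        (∀ u v : Fin n, u ≠ v →
          (G.neighborFinset u ∩ G.neighborFinset v).card ≤ 2) →
        ((G.edgeFinset.card : ℝ) ≤ 2 * (n : ℝ) - 3) →
        ∀ m : ℕ, m = (G.edgeFinset.filter (fun e => w ∉ e)).card →
        Real.sqrt ((n : ℝ) - 1) - 2 ≤ -lamMin G →
        -lamMin G ≤ Real.sqrt ((n : ℝ) - 1) + 2 →
        ∀ z : Fin n → ℝ,
          (G.adjMatrix ℝ).mulVec z = lamMin G • z →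
          z w = 1 →
          (∀ u : Fin n, |z u| ≤ 1) →
          |lamMin G + Real.sqrt ((n : ℝ) - 1) - (m : ℝ) / ((n : ℝ) - 1)| ≤
            C * (m : ℝ) / (n : ℝ) ^ ((3 : ℝ) / 2) := by
  refine ⟨100, by norm_num, 101, ?_⟩
  intro n hn G w hdom hcom _hedge m hm hlo hhi z hz hzw hzle
  classical
  set s := Real.sqrt ((n:ℝ) - 1) with hsdef
  set L := lamMin G with hL
  have heig : ∀ u, ∑ v ∈ G.neighborFinset u, z v = L * z u := by
    intro u
    have := congrFun hz u
    simpa using this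
  have hNw : G.neighborFinset w = univ.erase w := by
    ext u
    simp only [SimpleGraph.mem_neighborFinset, mem_erase, mem_univ, and_true]
    exact ⟨fun h => h.ne', fun h => hdom u h⟩
  have hB : ∑ v ∈ univ.erase w, z v = L := by
    have h := heig w; rw [hNw, hzw, mul_one] at h; exact h
  set A := (univ : Finset (Fin n)).erase w with hA
  set d : Fin n → ℕ := fun v => ((G.neighborFinset v).erase w).card with hd
  have hwv : ∀ v ∈ A, w ∈ G.neighborFinset v := by
    intro v hv
    rw [SimpleGraph.mem_neighborFinset]
    exact (hdom v (mem_erase.1 hv).1).symm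
  have hsplit : ∀ v ∈ A, L * z v = 1 + ∑ u ∈ (G.neighborFinset v).erase w, z u := by
    intro v hv
    rw [← heig v, ← Finset.add_sum_erase _ _ (hwv v hv), hzw]
  have hd2 : ∀ v ∈ A, d v ≤ 2 := by
    intro v hv
    refine le_trans (card_le_card ?_) (hcom v w (mem_erase.1 hv).1)
    intro u hu
    rw [mem_erase, SimpleGraph.mem_neighborFinset] at hu
    rw [mem_inter, SimpleGraph.mem_neighborFinset, SimpleGraph.mem_neighborFinset]
    exact ⟨hu.2, hdom u hu.1⟩
  have ht : ∀ v ∈ A, |∑ u ∈ (G.neighborFinset v).erase w, z u| ≤ 2 := by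
    intro v hv
    refine le_trans (Finset.abs_sum_le_sum_abs _ _) ?_
    refine le_trans (Finset.sum_le_sum fun u _ => hzle u) ?_
    rw [Finset.sum_const, nsmul_eq_mul, mul_one]
    exact_mod_cast hd2 v hv
  have hLz1 : ∀ v ∈ A, |L * z v - 1| ≤ 2 := by
    intro v hv
    rw [hsplit v hv]
    simpa using ht v hv
  have hG2 : ∀ v ∈ A, |L^2 * z v - L - d v| ≤ 4 := by
    intro v hv
    have h1 : L^2 * z v = L + ∑ u ∈ (G.neighborFinset v).erase w, L * z u := by
      calc L^2 * z v = L * (L * z v) := by ring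
        _ = L * (1 + ∑ u ∈ (G.neighborFinset v).erase w, z u) := by rw [hsplit v hv]
        _ = L + ∑ u ∈ (G.neighborFinset v).erase w, L * z u := by
            rw [mul_add, mul_one, mul_sum]
    have hdv : ((d v : ℝ)) = ∑ u ∈ (G.neighborFinset v).erase w, (1:ℝ) := by
      rw [Finset.sum_const, nsmul_eq_mul, mul_one]
    have h2 : L^2 * z v - L - d v = ∑ u ∈ (G.neighborFinset v).erase w, (L * z u - 1) := by
      rw [h1, hdv, Finset.sum_sub_distrib]
      ring
    rw [h2]
    refine le_trans (Finset.abs_sum_le_sum_abs _ _) ?_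
    have hb : ∀ u ∈ (G.neighborFinset v).erase w, |L * z u - 1| ≤ 2 := by
      intro u hu
      exact hLz1 u (mem_erase.2 ⟨(mem_erase.1 hu).1, mem_univ u⟩)
    refine le_trans (Finset.sum_le_sum hb) ?_
    rw [Finset.sum_const, nsmul_eq_mul]
    have := hd2 v hv
    have : ((d v : ℝ)) ≤ 2 := by exact_mod_cast this
    nlinarith
  have hswap : ∑ v ∈ A, ∑ u ∈ (G.neighborFinset v).erase w, z u
      = ∑ u ∈ A, (d u : ℝ) * z u := by
    have key : ∀ v : Fin n, (G.neighborFinset v).erase w = A.filter (fun u => G.Adj v u) := by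
      intro v
      ext u
      simp only [mem_erase, SimpleGraph.mem_neighborFinset, mem_filter, hA, mem_univ, and_true]
    calc ∑ v ∈ A, ∑ u ∈ (G.neighborFinset v).erase w, z u
        = ∑ v ∈ A, ∑ u ∈ A, if G.Adj v u then z u else 0 := by
          refine sum_congr rfl fun v _ => ?_
          rw [key v, sum_filter]
      _ = ∑ u ∈ A, ∑ v ∈ A, if G.Adj v u then z u else 0 := Finset.sum_comm
      _ = ∑ u ∈ A, (d u : ℝ) * z u := by
          refine sum_congr rfl fun u _ => ?_
          have key2 : A.filter (fun v => G.Adj v u) = (G.neighborFinset u).erase w := by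
            ext v
            simp only [mem_erase, SimpleGraph.mem_neighborFinset, mem_filter, hA, mem_univ,
              and_true, G.adj_comm]
          rw [← sum_filter, key2, Finset.sum_const, nsmul_eq_mul]
  have hcardA : ((A.card : ℝ)) = (n : ℝ) - 1 := by
    have : A.card = n - 1 := by
      rw [hA, card_erase_of_mem (mem_univ w), card_univ, Fintype.card_fin]
    rw [this]
    have : (1:ℕ) ≤ n := by omega
    push_cast [this]
    ring
  have hidE : L^2 - ((n:ℝ) - 1) = ∑ v ∈ A, (d v : ℝ) * z v := by
    have h1 : ∑ v ∈ A, (L * z v) = L * L := by rw [← mul_sum, hB]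
    have h2 : ∑ v ∈ A, (L * z v)
        = (A.card : ℝ) + ∑ v ∈ A, ∑ u ∈ (G.neighborFinset v).erase w, z u := by
      rw [Finset.sum_congr rfl hsplit, Finset.sum_add_distrib, Finset.sum_const,
        nsmul_eq_mul, mul_one]
    linear_combination -h1 + h2 + hswap + hcardA
  -- degree sum
  set G' : SimpleGraph (Fin n) := G.deleteEdges {e | w ∈ e} with hG'def
  have hG'adj : ∀ u v : Fin n, G'.Adj u v ↔ G.Adj u v ∧ u ≠ w ∧ v ≠ w := by
    intro u v
    rw [hG'def, SimpleGraph.deleteEdges_adj]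
    simp only [Set.mem_setOf_eq, Sym2.mem_iff, not_or]
    constructor
    · rintro ⟨h, h1, h2⟩; exact ⟨h, fun e => h1 e.symm, fun e => h2 e.symm⟩
    · rintro ⟨h, h1, h2⟩; exact ⟨h, fun e => h1 e.symm, fun e => h2 e.symm⟩
  have hG'edge : G'.edgeFinset = G.edgeFinset.filter (fun e => w ∉ e) := by
    ext e
    induction e using Sym2.ind with
    | _ u v =>
      simp only [SimpleGraph.mem_edgeFinset, mem_filter, SimpleGraph.mem_edgeSet, hG'adj,
        Sym2.mem_iff, not_or]
      constructor
      · rintro ⟨h, h1, h2⟩; exact ⟨h, fun e => h1 e.symm, fun e => h2 e.symm⟩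
      · rintro ⟨h, h1, h2⟩; exact ⟨h, fun e => h1 e.symm, fun e => h2 e.symm⟩
  have hm' : m = G'.edgeFinset.card := by rw [hm, hG'edge]
  have hdegsum : ∑ v, G'.degree v = 2 * m := by
    rw [hm']; exact G'.sum_degrees_eq_twice_card_edges
  have hG'nbr : ∀ v ∈ A, G'.neighborFinset v = (G.neighborFinset v).erase w := by
    intro v hv
    have hvw : v ≠ w := (mem_erase.1 hv).1
    ext u
    simp only [SimpleGraph.mem_neighborFinset, hG'adj, mem_erase]
    tauto
  have hG'w : G'.degree w = 0 := by
    have h0 : G'.neighborFinset w = ∅ := by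
      ext u
      simp [SimpleGraph.mem_neighborFinset, hG'adj]
    rw [← SimpleGraph.card_neighborFinset_eq_degree, h0, card_empty]
  have hdegA : ∑ v ∈ A, d v = 2 * m := by
    have hsplitu : ∑ v, G'.degree v = G'.degree w + ∑ v ∈ A, G'.degree v := by
      rw [hA, ← Finset.add_sum_erase _ _ (mem_univ w)]
    have h1 : ∑ v ∈ A, G'.degree v = 2 * m := by
      rw [hsplitu, hG'w, zero_add] at hdegsum; exact hdegsum
    rw [← h1]
    refine sum_congr rfl fun v hv => ?_
    have hh : G'.degree v = d v := by
      rw [← SimpleGraph.card_neighborFinset_eq_degree, hG'nbr v hv]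
    exact hh.symm
  have hSd : ∑ v ∈ A, ((d v : ℝ)) = 2 * (m:ℝ) := by exact_mod_cast hdegA
  -- main estimate
  have hX : |L^2 * (L^2 - ((n:ℝ)-1)) - 2*(m:ℝ)*L| ≤ 12*(m:ℝ) := by
    have e0 : ∑ v ∈ A, ((d v:ℝ) * (L^2 * z v - L - d v) + (d v:ℝ)^2)
        = ∑ v ∈ A, ((d v:ℝ) * (L^2 * z v)) - L * ∑ v ∈ A, (d v:ℝ) := by
      rw [mul_sum, ← Finset.sum_sub_distrib]
      exact sum_congr rfl fun v _ => by ring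
    have e1 : ∑ v ∈ A, ((d v:ℝ) * (L^2 * z v)) = L^2 * ∑ v ∈ A, (d v:ℝ) * z v := by
      rw [mul_sum]
      exact sum_congr rfl fun v _ => by ring
    have e2 : L^2 * (L^2 - ((n:ℝ)-1)) - 2*(m:ℝ)*L
        = ∑ v ∈ A, ((d v:ℝ) * (L^2 * z v - L - d v) + (d v:ℝ)^2) := by
      rw [e0, e1, ← hidE, hSd]
      ring
    rw [e2]
    refine le_trans (Finset.abs_sum_le_sum_abs _ _) ?_
    have hb : ∀ v ∈ A, |(d v:ℝ) * (L^2 * z v - L - d v) + (d v:ℝ)^2| ≤ 6 * (d v:ℝ) := by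
      intro v hv
      have h4 := hG2 v hv
      have hdr : ((d v:ℝ)) ≤ 2 := by exact_mod_cast hd2 v hv
      have hd0 : (0:ℝ) ≤ d v := Nat.cast_nonneg _
      have hmul : |(d v:ℝ) * (L^2 * z v - L - d v)| ≤ (d v:ℝ) * 4 := by
        rw [abs_mul, abs_of_nonneg hd0]
        exact mul_le_mul_of_nonneg_left h4 hd0
      calc |(d v:ℝ) * (L^2 * z v - L - d v) + (d v:ℝ)^2|
          ≤ |(d v:ℝ) * (L^2 * z v - L - d v)| + |(d v:ℝ)^2| := abs_add_le _ _
        _ ≤ (d v:ℝ) * 4 + (d v:ℝ)^2 := by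
            refine add_le_add hmul ?_
            rw [abs_of_nonneg (sq_nonneg _)]
        _ ≤ 6 * (d v:ℝ) := by nlinarith
    refine le_trans (Finset.sum_le_sum hb) ?_
    rw [← Finset.mul_sum, hSd]
    ring_nf
    linarith
  exact endgame15 (n:ℝ) L (m:ℝ) (by exact_mod_cast hn) (Nat.cast_nonneg m) hlo hhi hX
end
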